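/- arXiv:1404.3116 — 5 statements merged into one kernel-verified Lean document; each statement's English description precedes it below -/
import Mathlib

section
/- Let f₁,...,f_N be the standard basis of ℝᴺ, R > 0, and y₁,...,y_N ∈ ℝᴺ with ‖y_i‖_∞ ≤ 1 for each i. Set v_i = R·f_i + y_i. Then the closed Euclidean ball of radius R/√N − √N is contained in the absolutely convex hull (i.e., the convex hull of {±v_i : 1 ≤ i ≤ N}) of v₁,...,v_N. -/
/-!
By Hahn–Banach it suffices to show that every linear functional `⟪φ, ·⟫` is at least as large
at some `±vᵢ` as anywhere on the ball, i.e. that `(R/√N − √N)‖φ‖ ≤ |⟪φ, vᵢ⟫|` for some `i`.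
Take `i` with `|φᵢ|` maximal, so `‖φ‖ ≤ √N |φᵢ|`. Since `‖yᵢ‖_∞ ≤ 1`, the perturbation costs
at most `‖φ‖₁ ≤ √N ‖φ‖`, hence `|⟪φ, vᵢ⟫| ≥ R|φᵢ| − ‖φ‖₁ ≥ (R/√N) ‖φ‖ − √N ‖φ‖`.
-/

open scoped RealInnerProductSpace

section Separation

variable {E : Type*} [NormedAddCommGroup E] [InnerProductSpace ℝ E] [CompleteSpace E]

theorem mem_convexHull_of_forall_exists_inner_le {s : Set E} (hs : s.Finite) {x : E}
    (h : ∀ φ : E, ∃ a ∈ s, ⟪φ, x⟫ ≤ ⟪φ, a⟫) : x ∈ convexHull ℝ s := by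
  by_contra hx
  obtain ⟨f, u, hf, hu⟩ :=
    geometric_hahn_banach_closed_point (convex_convexHull ℝ s) (hs.isClosed_convexHull ℝ) hx
  obtain ⟨a, ha, hle⟩ := h ((InnerProductSpace.toDual ℝ E).symm f)
  rw [InnerProductSpace.toDual_symm_apply, InnerProductSpace.toDual_symm_apply] at hle
  linarith [hf a (subset_convexHull ℝ s ha)]

theorem mem_convexHull_range_union_neg_of_forall_exists_le_abs_inner {ι : Type*} [Finite ι]
    {v : ι → E} {x : E} (h : ∀ φ : E, ∃ i, ⟪φ, x⟫ ≤ |⟪φ, v i⟫|) :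
    x ∈ convexHull ℝ (Set.range v ∪ -Set.range v) := by
  refine mem_convexHull_of_forall_exists_inner_le
    ((Set.finite_range v).union (Set.finite_range v).neg) fun φ ↦ ?_
  obtain ⟨i, hi⟩ := h φ
  rcases abs_cases ⟪φ, v i⟫ with ⟨habs, -⟩ | ⟨habs, -⟩
  · exact ⟨v i, .inl ⟨i, rfl⟩, habs ▸ hi⟩
  · refine ⟨-v i, .inr (Set.neg_mem_neg.2 ⟨i, rfl⟩), ?_⟩
    rwa [inner_neg_right, ← habs]

end Separation

namespace EuclideanSpace

variable {ι : Type*} [Fintype ι]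

theorem sum_abs_le_sqrt_card_mul_norm (φ : EuclideanSpace ℝ ι) :
    ∑ j, |φ j| ≤ √(Fintype.card ι) * ‖φ‖ := by
  simpa [EuclideanSpace.norm_eq, mul_comm] using
    Real.sum_mul_le_sqrt_mul_sqrt Finset.univ (fun j ↦ |φ j|) (fun _ ↦ 1)

theorem exists_norm_le_sqrt_card_mul_abs [Nonempty ι] (φ : EuclideanSpace ℝ ι) :
    ∃ i, ‖φ‖ ≤ √(Fintype.card ι) * |φ i| := by
  obtain ⟨i, hi⟩ := Finite.exists_max fun j ↦ |φ j|
  refine ⟨i, (OrthonormalBasis.norm_le_card_mul_iSup_norm_inner (basisFun ι ℝ) φ).trans ?_⟩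
  gcongr
  exact ciSup_le fun j ↦ by simpa using hi j

theorem abs_inner_le_sum_abs {y : EuclideanSpace ℝ ι} (hy : ∀ j, |y j| ≤ 1)
    (φ : EuclideanSpace ℝ ι) : |⟪φ, y⟫| ≤ ∑ j, |φ j| := by
  rw [PiLp.inner_apply]
  refine (Finset.abs_sum_le_sum_abs _ _).trans (Finset.sum_le_sum fun j _ ↦ ?_)
  simpa [abs_mul] using mul_le_of_le_one_left (abs_nonneg (φ j)) (hy j)

theorem sub_sum_abs_le_abs_inner_smul_single_add [DecidableEq ι] {y : EuclideanSpace ℝ ι}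
    (hy : ∀ j, |y j| ≤ 1) (R : ℝ) (i : ι) (φ : EuclideanSpace ℝ ι) :
    R * |φ i| - ∑ j, |φ j| ≤ |⟪φ, R • single i 1 + y⟫| := by
  rw [inner_add_right, inner_smul_right, inner_single_right, one_mul, conj_trivial]
  calc R * |φ i| - ∑ j, |φ j| ≤ |R * φ i| - |⟪φ, y⟫| := by
        gcongr
        · exact abs_mul R (φ i) ▸ mul_le_mul_of_nonneg_right (le_abs_self R) (abs_nonneg _)
        · exact abs_inner_le_sum_abs hy φ
    _ ≤ |R * φ i + ⟪φ, y⟫| := by simpa using abs_sub_abs_le_abs_sub (R * φ i) (-⟪φ, y⟫)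

end EuclideanSpace

theorem stmt2_general {N : ℕ} (hN : 0 < N) (R : ℝ)
    (y : Fin N → EuclideanSpace ℝ (Fin N))
    (hy : ∀ i j, |y i j| ≤ 1)
    (v : Fin N → EuclideanSpace ℝ (Fin N))
    (hv : ∀ i, v i = R • EuclideanSpace.single i 1 + y i) :
    Metric.closedBall (0 : EuclideanSpace ℝ (Fin N)) (R / Real.sqrt N - Real.sqrt N) ⊆
      convexHull ℝ (Set.range v ∪ (-(Set.range v))) := by
  intro x hx
  rw [mem_closedBall_zero_iff] at hx
  have : Nonempty (Fin N) := Fin.pos_iff_nonempty.mp hN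
  have hsqrtN : 0 < √(N : ℝ) := Real.sqrt_pos.mpr (Nat.cast_pos.mpr hN)
  have hR : 0 ≤ R := by
    have : 0 ≤ R / √N := by linarith [norm_nonneg x]
    simpa [hsqrtN.ne'] using mul_nonneg this hsqrtN.le
  refine mem_convexHull_range_union_neg_of_forall_exists_le_abs_inner fun φ ↦ ?_
  obtain ⟨i, hi⟩ := EuclideanSpace.exists_norm_le_sqrt_card_mul_abs φ
  rw [Fintype.card_fin] at hi
  refine ⟨i, ?_⟩
  calc ⟪φ, x⟫ ≤ ‖φ‖ * (R / √N - √N) := (real_inner_le_norm φ x).trans (by gcongr)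
    _ = R * (‖φ‖ / √N) - √N * ‖φ‖ := by ring
    _ ≤ R * |φ i| - ∑ j, |φ j| := by
        gcongr
        · exact (div_le_iff₀' hsqrtN).mpr hi
        · simpa using EuclideanSpace.sum_abs_le_sqrt_card_mul_norm φ
    _ ≤ |⟪φ, v i⟫| := hv i ▸ EuclideanSpace.sub_sum_abs_le_abs_inner_smul_single_add (hy i) R i φ

/-- If `vᵢ = R·fᵢ + yᵢ` with `‖yᵢ‖_∞ ≤ 1`, then the Euclidean ball of radius
`R/√N − √N` is contained in the absolutely convex hull of `v₁, …, v_N`. -/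
theorem stmt2 {N : ℕ} (hN : 0 < N) (R : ℝ) (hR : 0 < R)
    (y : Fin N → EuclideanSpace ℝ (Fin N))
    (hy : ∀ i j, |y i j| ≤ 1)
    (v : Fin N → EuclideanSpace ℝ (Fin N))
    (hv : ∀ i, v i = R • EuclideanSpace.single i 1 + y i)
    (hrad : 0 < R / Real.sqrt N - Real.sqrt N) :
    Metric.closedBall (0 : EuclideanSpace ℝ (Fin N)) (R / Real.sqrt N - Real.sqrt N) ⊆
      convexHull ℝ (Set.range v ∪ (-(Set.range v))) :=
  stmt2_general hN R y hy v hv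
end

section
/- Let Γ be an N × n real matrix with columns x_{·1},...,x_{·n}. Suppose ‖x_{·1}‖₂ ≤ √N and the Euclidean ball √N · B₂ᴺ is contained in the absolutely convex hull of {x_{·k} : k ≠ 1}. Then there exists w ∈ ℝⁿ supported on {2,...,n} with ‖w‖₁ ≤ 1 and Γ·e₁ = Γ·w, where e₁ is the first standard basis vector; consequently Γ does not satisfy exact reconstruction of order 1. -/
/-!
The combinations `∑ w j • x_{·j}` with `w` supported off the first index and `‖w‖₁ ≤ 1` form
the linear image of a convex set, which contains every `± x_{·k}`, `k ≠ 1`; hence it contains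
their absolutely convex hull, and in particular `x_{·1} ∈ √N · B₂ᴺ`. Such a `w` is a second
solution of `Γ t = Γ e₁` whose `ℓ¹`-norm does not exceed that of `e₁`.
-/

open Finset

section AbsolutelyConvexHull

variable {ι E : Type*} [Fintype ι] [AddCommGroup E] [Module ℝ E]

lemma convex_setOf_support_subset_sum_abs_le_one (s : Set ι) :
    Convex ℝ {w : ι → ℝ | (∀ j ∉ s, w j = 0) ∧ ∑ j, |w j| ≤ 1} := by
  rintro w ⟨hws, hw⟩ w' ⟨hws', hw'⟩ a b ha hb hab
  refine ⟨fun j hj => by simp [hws j hj, hws' j hj], ?_⟩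
  calc ∑ j, |(a • w + b • w') j|
      ≤ ∑ j, (a * |w j| + b * |w' j|) := by
        refine sum_le_sum fun j _ => ?_
        simpa [abs_mul, abs_of_nonneg ha, abs_of_nonneg hb] using abs_add_le (a * w j) (b * w' j)
    _ = a * ∑ j, |w j| + b * ∑ j, |w' j| := by rw [sum_add_distrib, mul_sum, mul_sum]
    _ ≤ a * 1 + b * 1 := by gcongr
    _ = 1 := by rw [mul_one, mul_one, hab]

lemma exists_sum_abs_le_one_of_mem_convexHull_union_neg (v : ι → E) (s : Set ι) {x : E}
    (hx : x ∈ convexHull ℝ (v '' s ∪ -(v '' s))) :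
    ∃ w : ι → ℝ, (∀ j ∉ s, w j = 0) ∧ ∑ j, |w j| ≤ 1 ∧ ∑ j, w j • v j = x := by
  classical
  let W := {w : ι → ℝ | (∀ j ∉ s, w j = 0) ∧ ∑ j, |w j| ≤ 1}
  have hsingle : ∀ k ∈ s, ∀ c : ℝ, |c| = 1 → Pi.single k c ∈ W := fun k hk c hc =>
    ⟨fun j hj => Pi.single_eq_of_ne (ne_of_mem_of_not_mem hk hj).symm _, by
      rw [sum_eq_single k (fun j _ hj => by simp [hj]) (by simp)]; simp [hc]⟩
  have hsub : v '' s ∪ -(v '' s) ⊆ Fintype.linearCombination ℝ v '' W := by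
    rintro _ (⟨k, hk, rfl⟩ | ⟨k, hk, hneg⟩)
    · exact ⟨Pi.single k 1, hsingle k hk 1 (by simp), by simp⟩
    · exact ⟨Pi.single k (-1), hsingle k hk (-1) (by simp), by simp [hneg]⟩
  obtain ⟨w, hw, rfl⟩ := convexHull_min hsub
    ((convex_setOf_support_subset_sum_abs_le_one s).linear_image _) hx
  exact ⟨w, hw.1, hw.2, (Fintype.linearCombination_apply ℝ v w).symm⟩

end AbsolutelyConvexHull

section ExactReconstruction

variable {m ι : Type*} [Fintype ι]

def ExactReconstruction (s : ℕ) (Γ : Matrix m ι ℝ) : Prop :=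
  ∀ v : ι → ℝ, (Function.support v).ncard ≤ s →
    ∀ t : ι → ℝ, Γ.mulVec t = Γ.mulVec v → (∑ j, |t j|) ≤ (∑ j, |v j|) → t = v

lemma not_exactReconstruction_one_of_mulVec_single_eq [DecidableEq ι] (Γ : Matrix m ι ℝ)
    (k : ι) (w : ι → ℝ) (hwk : w k = 0) (hw : ∑ j, |w j| ≤ 1)
    (h : Γ.mulVec (Pi.single k 1) = Γ.mulVec w) : ¬ ExactReconstruction 1 Γ := by
  intro hER
  have hsparse : (Function.support (Pi.single k (1 : ℝ))).ncard ≤ 1 := by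
    rw [Pi.support_single_of_ne one_ne_zero, Set.ncard_singleton]
  have hnorm : ∑ j, |(Pi.single k (1 : ℝ) : ι → ℝ) j| = 1 := by
    rw [sum_eq_single k (fun j _ hj => by simp [hj]) (by simp)]; simp
  have := congrFun (hER _ hsparse w h.symm (hnorm.symm ▸ hw)) k
  simp [hwk] at this

end ExactReconstruction

lemma Matrix.mulVec_eq_ofLp_sum_smul {N ι : Type*} [Fintype N] [Fintype ι]
    (Γ : Matrix N ι ℝ) (col : ι → EuclideanSpace ℝ N) (hcol : ∀ k i, col k i = Γ i k)
    (w : ι → ℝ) : Γ.mulVec w = WithLp.ofLp (∑ j, w j • col j) := by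
  ext i
  simp [Matrix.mulVec, dotProduct, hcol, mul_comm]

/-- If the first column of `Γ` has Euclidean norm at most `√N` and `√N·B₂ᴺ` is contained in
the absolutely convex hull of the remaining columns, then `Γ·e₁` can be written as `Γ·w` for
some `w` supported on `{2,…,n}` with `‖w‖₁ ≤ 1`; consequently `Γ` does not satisfy exact
reconstruction of order 1. -/
theorem stmt4 {N n : ℕ} (hn : 0 < n) (Γ : Matrix (Fin N) (Fin n) ℝ)
    (col : Fin n → EuclideanSpace ℝ (Fin N))
    (hcol : ∀ k i, col k i = Γ i k)
    (h1 : ‖col ⟨0, hn⟩‖ ≤ Real.sqrt N)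
    (h2 : Metric.closedBall (0 : EuclideanSpace ℝ (Fin N)) (Real.sqrt N) ⊆
      convexHull ℝ ((col '' {k | k ≠ ⟨0, hn⟩}) ∪ (-(col '' {k | k ≠ ⟨0, hn⟩})))) :
    (∃ w : Fin n → ℝ, (∀ j, w j ≠ 0 → j ≠ ⟨0, hn⟩) ∧ (∑ j, |w j|) ≤ 1 ∧
        Γ.mulVec (Pi.single ⟨0, hn⟩ 1) = Γ.mulVec w) ∧
      ¬ (∀ v : Fin n → ℝ, (Function.support v).ncard ≤ 1 →
          ∀ t : Fin n → ℝ, Γ.mulVec t = Γ.mulVec v → (∑ j, |t j|) ≤ (∑ j, |v j|) → t = v) := by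
  set k₀ : Fin n := ⟨0, hn⟩
  obtain ⟨w, hws, hw, hsum⟩ := exists_sum_abs_le_one_of_mem_convexHull_union_neg col _
    (h2 (mem_closedBall_zero_iff.2 h1))
  have hΓw : Γ.mulVec (Pi.single k₀ 1) = Γ.mulVec w := by
    rw [Γ.mulVec_eq_ofLp_sum_smul col hcol, Γ.mulVec_eq_ofLp_sum_smul col hcol, hsum,
      Fintype.sum_eq_single k₀ (fun j hj => by simp [hj]), Pi.single_eq_same, one_smul]
  have hwk₀ : w k₀ = 0 := hws k₀ (by simp)
  exact ⟨⟨w, fun j hj hjk => hj (hjk ▸ hwk₀), hw, hΓw⟩,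
    not_exactReconstruction_one_of_mulVec_single_eq Γ k₀ w hwk₀ hw hΓw⟩
end

section
/- Let R ≥ 1, δ ∈ (0,1], p ≥ 2, and set z = ε(1 + Rη) where ε is Rademacher and η is an independent Bernoulli(δ) variable. If R²δ ≤ 1 and R^p δ ≥ 1, then there exist absolute constants c, C > 0 (independent of R, δ, p) such that c · R · δ^{1/p} ≤ ‖z‖_{L_p}/‖z‖_{L_2} ≤ C · R · δ^{1/p}. -/
lemma stmt7_aux (N D r s : ℝ) (h1 : r ≤ N) (h2 : N ≤ 3 * r) (h3 : 1 ≤ D)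
    (h4 : D ≤ 3) (hr : 0 ≤ r) (hs : s = N / D) :
    (1/3) * r ≤ s ∧ s ≤ 3 * r := by
  subst hs
  have hD0 : (0:ℝ) < D := by linarith
  constructor
  · have : r / 3 ≤ N / D := div_le_div₀ (by linarith) h1 hD0 h4
    linarith
  · have : N / D ≤ N / 1 := div_le_div_of_nonneg_left (by linarith) (by norm_num) h3
    simp at this
    linarith

set_option maxHeartbeats 1000000 in
/-- Under `R²δ ≤ 1` and `R^pδ ≥ 1`, the ratio `‖z‖_{L_p}/‖z‖_{L_2}` (computed
from `E|z|^q = 1 + ((1+R)^q − 1)δ` for `z = ε(1+Rη)`) is two-sided comparable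
to `R·δ^{1/p}`, with absolute constants. -/
theorem stmt7 : ∃ c C : ℝ, 0 < c ∧ 0 < C ∧
    ∀ R δ p : ℝ, 1 ≤ R → 0 < δ → δ ≤ 1 → 2 ≤ p →
      R ^ (2 : ℝ) * δ ≤ 1 → 1 ≤ R ^ p * δ →
      c * R * δ ^ (1 / p) ≤
          (1 + ((1 + R) ^ p - 1) * δ) ^ (1 / p) /
            (1 + ((1 + R) ^ (2 : ℝ) - 1) * δ) ^ ((1 : ℝ) / 2) ∧
        (1 + ((1 + R) ^ p - 1) * δ) ^ (1 / p) /
            (1 + ((1 + R) ^ (2 : ℝ) - 1) * δ) ^ ((1 : ℝ) / 2) ≤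
          C * R * δ ^ (1 / p) := by
  refine ⟨1/3, 3, by norm_num, by norm_num, ?_⟩
  intro R δ p hR hδ hδ1 hp hR2 hRp
  simp only [Real.rpow_two] at hR2 ⊢
  have hp0 : (0:ℝ) < p := by linarith
  have hA0 : (0:ℝ) ≤ 1 + R := by linarith
  have hA1 : (1:ℝ) ≤ 1 + R := by linarith
  have hR0 : (0:ℝ) ≤ R := by linarith
  have hδp0 : (0:ℝ) ≤ δ ^ (1/p) := Real.rpow_nonneg hδ.le _
  -- powers of (1+R)
  have hAp1 : (1:ℝ) ≤ (1 + R) ^ p := Real.one_le_rpow hA1 hp0.le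
  have hRpA : R ^ p ≤ (1 + R) ^ p := Real.rpow_le_rpow hR0 (by linarith) hp0.le
  have hApδ : (1:ℝ) ≤ (1 + R) ^ p * δ := le_trans hRp (by nlinarith)
  -- denominator bounds
  have hD1 : (1:ℝ) ≤ 1 + ((1 + R) ^ 2 - 1) * δ := by nlinarith
  have hD5 : 1 + ((1 + R) ^ 2 - 1) * δ ≤ 5 := by nlinarith
  have hDs1 : (1:ℝ) ≤ (1 + ((1 + R) ^ 2 - 1) * δ) ^ ((1:ℝ)/2) := by
    have := Real.rpow_le_rpow (by norm_num : (0:ℝ) ≤ 1) hD1 (by norm_num : (0:ℝ) ≤ 1/2)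
    simpa using this
  have hDs3 : (1 + ((1 + R) ^ 2 - 1) * δ) ^ ((1:ℝ)/2) ≤ 3 := by
    have h1 : (1 + ((1 + R) ^ 2 - 1) * δ) ^ ((1:ℝ)/2) ≤ (5:ℝ) ^ ((1:ℝ)/2) :=
      Real.rpow_le_rpow (by linarith) hD5 (by norm_num)
    have h2 : (5:ℝ) ^ ((1:ℝ)/2) = Real.sqrt 5 := (Real.sqrt_eq_rpow 5).symm
    have h3 : Real.sqrt 5 ≤ 3 := by
      nlinarith [Real.sq_sqrt (by norm_num : (0:ℝ) ≤ 5), Real.sqrt_nonneg 5]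
    rw [h2] at h1; linarith
  -- numerator bounds
  have hNlow : (1 + R) ^ p * δ ≤ 1 + ((1 + R) ^ p - 1) * δ := by nlinarith
  have hNup : 1 + ((1 + R) ^ p - 1) * δ ≤ 2 * ((1 + R) ^ p * δ) := by nlinarith
  have hN0 : (0:ℝ) ≤ 1 + ((1 + R) ^ p - 1) * δ := by nlinarith
  have hprod : ((1 + R) ^ p * δ) ^ (1/p) = (1 + R) * δ ^ (1/p) := by
    rw [Real.mul_rpow (Real.rpow_nonneg hA0 p) hδ.le, ← Real.rpow_mul hA0,
      mul_one_div_cancel hp0.ne', Real.rpow_one]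
  have key1 : R * δ ^ (1/p) ≤ (1 + ((1 + R) ^ p - 1) * δ) ^ (1/p) := by
    have h := Real.rpow_le_rpow (by positivity) hNlow (by positivity : (0:ℝ) ≤ 1/p)
    rw [hprod] at h
    nlinarith
  have key2 : (1 + ((1 + R) ^ p - 1) * δ) ^ (1/p) ≤ 3 * (R * δ ^ (1/p)) := by
    have h := Real.rpow_le_rpow hN0 hNup (by positivity : (0:ℝ) ≤ 1/p)
    have h2 : (2 * ((1 + R) ^ p * δ)) ^ (1/p)
        = 2 ^ (1/p) * ((1 + R) * δ ^ (1/p)) := by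
      rw [Real.mul_rpow (by norm_num) (by positivity), hprod]
    have h3 : (2:ℝ) ^ (1/p) ≤ (2:ℝ) ^ ((1:ℝ)/2) :=
      Real.rpow_le_rpow_of_exponent_le (by norm_num)
        (one_div_le_one_div_of_le (by norm_num) hp)
    have h4 : (2:ℝ) ^ ((1:ℝ)/2) ≤ 3/2 := by
      rw [← Real.sqrt_eq_rpow]
      nlinarith [Real.sq_sqrt (by norm_num : (0:ℝ) ≤ 2), Real.sqrt_nonneg 2]
    have h5 : (1 + R) * δ ^ (1/p) ≤ 2 * (R * δ ^ (1/p)) := by nlinarith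
    have h6 : (0:ℝ) ≤ (1 + R) * δ ^ (1/p) := by positivity
    calc (1 + ((1 + R) ^ p - 1) * δ) ^ (1/p)
        ≤ 2 ^ (1/p) * ((1 + R) * δ ^ (1/p)) := by rw [← h2]; exact h
      _ ≤ (3/2) * (2 * (R * δ ^ (1/p))) := by
          apply mul_le_mul (le_trans h3 h4) h5 h6 (by norm_num)
      _ = 3 * (R * δ ^ (1/p)) := by ring
  have := stmt7_aux ((1 + ((1 + R) ^ p - 1) * δ) ^ (1/p))
    ((1 + ((1 + R) ^ 2 - 1) * δ) ^ ((1:ℝ)/2)) (R * δ ^ (1/p)) _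
    key1 key2 hDs1 hDs3 (by positivity) rfl
  constructor
  · calc (1/3) * R * δ ^ (1/p) = (1/3) * (R * δ ^ (1/p)) := by ring
      _ ≤ _ := this.1
  · calc _ ≤ 3 * (R * δ ^ (1/p)) := this.2
      _ = 3 * R * δ ^ (1/p) := by ring
end

section
/- Let R = √p · (1/δ)^{1/p} with p ≥ 2 and δ ∈ (0,1) satisfying R²δ ≤ 1, and let z = ε(1 + Rη) with ε Rademacher and η independent Bernoulli(δ). Then there exist absolute constants c, C > 0 such that c√p ≤ ‖z‖_{L_p}/‖z‖_{L_2} ≤ C√p. -/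
/-!
The scale `R` is chosen so that `R δ^{1/p} = √p`. The `p`-th moment of `z` is at least the
contribution `R^p δ` of the event `{η = 1}`, and at most `1 + ((1 + R) δ^{1/p})^p`, whose
`p`-th root is at most `1 + (1 + R) δ^{1/p} ≤ 2 + √p` by subadditivity of `t ↦ t^{1/p}`.
The condition `R²δ ≤ 1` forces `Rδ ≤ 1`, so the second moment `1 + (2R + R²)δ` lies
in `[1, 4]`.
-/

open Real

/-- `E|z|^q` for `z = ε(1 + Rη)`, `ε` Rademacher and `η` an independent Bernoulli(`δ`). -/
noncomputable def rademacherBernoulliMoment (R δ q : ℝ) : ℝ :=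
  1 + ((1 + R) ^ q - 1) * δ

section

variable {R δ q : ℝ}

lemma mul_rpow_one_div_le_rademacherBernoulliMoment_rpow (hR : 0 ≤ R) (hδ₀ : 0 ≤ δ)
    (hδ₁ : δ ≤ 1) (hq : 0 < q) :
    R * δ ^ (1 / q) ≤ rademacherBernoulliMoment R δ q ^ (1 / q) := by
  have hRq : R ^ q ≤ (1 + R) ^ q := rpow_le_rpow hR (by linarith) hq.le
  have hmoment : R ^ q * δ ≤ rademacherBernoulliMoment R δ q := by
    unfold rademacherBernoulliMoment; nlinarith
  have hnonneg : 0 ≤ rademacherBernoulliMoment R δ q :=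
    (by positivity : 0 ≤ R ^ q * δ).trans hmoment
  rwa [one_div, le_rpow_inv_iff_of_pos (by positivity) hnonneg hq, mul_rpow hR (by positivity),
    rpow_inv_rpow hδ₀ hq.ne']

lemma rademacherBernoulliMoment_rpow_le (hR : 0 ≤ R) (hδ : 0 ≤ δ) (hq : 1 ≤ q) :
    rademacherBernoulliMoment R δ q ^ (1 / q) ≤ 1 + (1 + R) * δ ^ (1 / q) := by
  have hq₀ : 0 < q := by linarith
  have hmoment : rademacherBernoulliMoment R δ q ≤ 1 ^ q + ((1 + R) * δ ^ (1 / q)) ^ q := by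
    rw [one_rpow, mul_rpow (by linarith) (by positivity), one_div, rpow_inv_rpow hδ hq₀.ne']
    unfold rademacherBernoulliMoment; nlinarith
  calc rademacherBernoulliMoment R δ q ^ (1 / q)
      ≤ (1 ^ q + ((1 + R) * δ ^ (1 / q)) ^ q) ^ (1 / q) := by
        gcongr
        unfold rademacherBernoulliMoment
        nlinarith [one_le_rpow (by linarith : (1 : ℝ) ≤ 1 + R) hq₀.le]
    _ ≤ 1 + (1 + R) * δ ^ (1 / q) := rpow_add_rpow_le_add zero_le_one (by positivity) hq

lemma rademacherBernoulliMoment_two (R δ : ℝ) :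
    rademacherBernoulliMoment R δ 2 = 1 + (2 * R + R ^ 2) * δ := by
  rw [rademacherBernoulliMoment, rpow_two]; ring

lemma one_le_rademacherBernoulliMoment_two_rpow_half (hR : 0 ≤ R) (hδ : 0 ≤ δ) :
    1 ≤ rademacherBernoulliMoment R δ 2 ^ ((1 : ℝ) / 2) := by
  rw [← sqrt_eq_rpow, one_le_sqrt, rademacherBernoulliMoment_two]
  have : 0 ≤ (2 * R + R ^ 2) * δ := by positivity
  linarith

lemma rademacherBernoulliMoment_two_rpow_half_le_two (hR : 0 ≤ R) (hδ₀ : 0 ≤ δ) (hδ₁ : δ ≤ 1)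
    (hRδ : R ^ (2 : ℝ) * δ ≤ 1) :
    rademacherBernoulliMoment R δ 2 ^ ((1 : ℝ) / 2) ≤ 2 := by
  rw [rpow_two] at hRδ
  have hRδ' : R * δ ≤ 1 := by
    have : (R * δ) ^ 2 ≤ 1 := by nlinarith
    nlinarith
  rw [← sqrt_eq_rpow, sqrt_le_left (by norm_num), rademacherBernoulliMoment_two]
  nlinarith

end

/-- With `R = √p (1/δ)^{1/p}` and `R²δ ≤ 1`, the ratio `‖z‖_{L_p}/‖z‖_{L_2}`
(computed from `E|z|^q = 1 + ((1+R)^q − 1)δ` for `z = ε(1+Rη)`) is two-sided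
comparable to `√p`, with absolute constants. -/
theorem stmt8 : ∃ c C : ℝ, 0 < c ∧ 0 < C ∧
    ∀ R δ p : ℝ, 2 ≤ p → 0 < δ → δ < 1 →
      R = Real.sqrt p * (1 / δ) ^ (1 / p) →
      R ^ (2 : ℝ) * δ ≤ 1 →
      c * Real.sqrt p ≤
          (1 + ((1 + R) ^ p - 1) * δ) ^ (1 / p) /
            (1 + ((1 + R) ^ (2 : ℝ) - 1) * δ) ^ ((1 : ℝ) / 2) ∧
        (1 + ((1 + R) ^ p - 1) * δ) ^ (1 / p) /
            (1 + ((1 + R) ^ (2 : ℝ) - 1) * δ) ^ ((1 : ℝ) / 2) ≤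
          C * Real.sqrt p := by
  refine ⟨1 / 2, 3, by norm_num, by norm_num, fun R δ p hp hδ₀ hδ₁ hR hRδ => ?_⟩
  have hR₀ : 0 ≤ R := hR ▸ by positivity
  have hscale : R * δ ^ (1 / p) = √p := by
    rw [hR, mul_assoc, ← mul_rpow (by positivity) hδ₀.le, one_div_mul_cancel hδ₀.ne', one_rpow,
      mul_one]
  have hsqrt : 1 ≤ √p := one_le_sqrt.mpr (by linarith)
  have hδp : δ ^ (1 / p) ≤ 1 := rpow_le_one hδ₀.le hδ₁.le (by positivity)
  have hLp_lower : √p ≤ rademacherBernoulliMoment R δ p ^ (1 / p) :=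
    hscale ▸ mul_rpow_one_div_le_rademacherBernoulliMoment_rpow hR₀ hδ₀.le hδ₁.le (by linarith)
  have hLp_upper : rademacherBernoulliMoment R δ p ^ (1 / p) ≤ 3 * √p := by
    have hLp := rademacherBernoulliMoment_rpow_le hR₀ hδ₀.le (by linarith : (1 : ℝ) ≤ p)
    rw [add_mul, one_mul, hscale] at hLp
    linarith
  have hL2_lower := one_le_rademacherBernoulliMoment_two_rpow_half hR₀ hδ₀.le
  have hL2_upper := rademacherBernoulliMoment_two_rpow_half_le_two hR₀ hδ₀.le hδ₁.le hRδ
  constructor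
  · calc 1 / 2 * √p = √p / 2 := by ring
      _ ≤ _ := div_le_div₀ (by linarith) hLp_lower (by linarith) hL2_upper
  · calc _ ≤ 3 * √p / 1 := div_le_div₀ (by positivity) hLp_upper zero_lt_one hL2_lower
      _ = 3 * √p := div_one _
end

section
/- Suppose v_i = R f_i + y_i for i = 1,...,N with ‖y_i‖_∞ ≤ 1 and R ≥ 2N. Then √N · B₂ᴺ ⊆ absconv(v₁,...,v_N). -/
/-!
Write a point as `x = ∑ cᵢ vᵢ`. In coordinate `j` this reads `R cⱼ = xⱼ - ∑ᵢ cᵢ yᵢⱼ`, and summing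
over `j` gives `(R - N) ‖c‖₁ ≤ ‖x‖₁ ≤ √N ‖x‖₂` because every column of `(yᵢⱼ)` has `ℓ¹`-norm at
most `N`. The same estimate makes the `vᵢ` linearly independent, so every `x` has such a
representation, and `‖c‖₁ ≤ 1` as soon as `‖x‖₂ ≤ (R - N) / √N`, a radius which is `≥ √N` when
`R ≥ 2N`. Finally, combinations with `‖c‖₁ ≤ 1` lie in the absolutely convex hull.
-/

open Finset

theorem AbsConvex.sum_smul_mem {ι E : Type*} [Fintype ι] [Nonempty ι] [AddCommGroup E]
    [Module ℝ E] {K : Set E} (hK : AbsConvex ℝ K) {v : ι → E} (hv : ∀ i, v i ∈ K)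
    {c : ι → ℝ} (hc : ∑ i, |c i| ≤ 1) : ∑ i, c i • v i ∈ K := by
  set t := ∑ i, |c i|
  rcases (sum_nonneg fun i _ ↦ abs_nonneg (c i) : 0 ≤ t).eq_or_lt with ht | ht
  · have hc0 : ∀ i, c i = 0 := fun i ↦ abs_eq_zero.mp <|
      (sum_eq_zero_iff_of_nonneg fun i _ ↦ abs_nonneg (c i)).mp ht.symm i (mem_univ i)
    simpa [hc0] using hK.1.zero_mem ⟨_, hv (Classical.arbitrary ι)⟩
  have hsign : ∀ i, (SignType.sign (c i) : ℝ) • v i ∈ K := fun i ↦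
    hK.1.smul_mem (by rcases SignType.sign (c i) with _ | _ | _ <;> simp) (hv i)
  have hy : ∑ i, (|c i| / t) • ((SignType.sign (c i) : ℝ) • v i) ∈ K :=
    hK.2.sum_mem (fun i _ ↦ by positivity) (by rw [← sum_div, div_self ht.ne'])
      fun i _ ↦ hsign i
  convert hK.1.smul_mem (a := t) (by rwa [Real.norm_of_nonneg ht.le]) hy using 1
  rw [smul_sum]
  refine sum_congr rfl fun i _ ↦ ?_
  rw [smul_smul, smul_smul, mul_div_cancel₀ _ ht.ne', mul_comm, sign_mul_abs]

theorem EuclideanSpace.sum_abs_le_sqrt_card_mul_norm_s16 {ι : Type*} [Fintype ι]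
    (x : EuclideanSpace ℝ ι) : ∑ j, |x j| ≤ √(Fintype.card ι) * ‖x‖ := by
  rw [← Real.sqrt_sq (norm_nonneg x), ← Real.sqrt_mul (Nat.cast_nonneg _),
    Real.le_sqrt (sum_nonneg fun j _ ↦ abs_nonneg _) (by positivity), EuclideanSpace.norm_sq_eq]
  simpa using sq_sum_le_card_mul_sum_sq (s := univ) (f := fun j ↦ |x j|)

namespace PerturbedBasis

variable {ι : Type*} [Fintype ι] [DecidableEq ι] {R s : ℝ} {y v : ι → EuclideanSpace ℝ ι}

theorem sum_smul_apply (hv : ∀ i, v i = R • EuclideanSpace.single i 1 + y i) (c : ι → ℝ)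
    (j : ι) : (∑ i, c i • v i) j = R * c j + ∑ i, c i * y i j := by
  simp [hv, Pi.single_apply, sum_add_distrib, mul_comm]

theorem sub_mul_sum_abs_le (hv : ∀ i, v i = R • EuclideanSpace.single i 1 + y i)
    (hy : ∀ i, ∑ j, |y i j| ≤ s) (c : ι → ℝ) :
    (R - s) * ∑ i, |c i| ≤ ∑ j, |(∑ i, c i • v i) j| := by
  have hcoord : ∀ j, R * |c j| ≤ |(∑ i, c i • v i) j| + ∑ i, |c i| * |y i j| := fun j ↦
    calc R * |c j| ≤ |R * c j| := by rw [abs_mul]; gcongr; exact le_abs_self R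
      _ = |(∑ i, c i • v i) j - ∑ i, c i * y i j| := by rw [sum_smul_apply hv]; ring_nf
      _ ≤ |(∑ i, c i • v i) j| + |∑ i, c i * y i j| := abs_sub _ _
      _ ≤ |(∑ i, c i • v i) j| + ∑ i, |c i| * |y i j| := by
        gcongr; exact (abs_sum_le_sum_abs _ _).trans_eq (by simp_rw [abs_mul])
  have hcols : ∑ j, ∑ i, |c i| * |y i j| ≤ s * ∑ i, |c i| :=
    calc ∑ j, ∑ i, |c i| * |y i j| = ∑ i, |c i| * ∑ j, |y i j| := by
          rw [sum_comm]; simp_rw [mul_sum]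
      _ ≤ ∑ i, |c i| * s := by gcongr with i; exact hy i
      _ = s * ∑ i, |c i| := by rw [← sum_mul, mul_comm]
  have := sum_le_sum fun j (_ : j ∈ univ) ↦ hcoord j
  rw [← mul_sum, sum_add_distrib] at this
  linarith

theorem linearIndependent (hv : ∀ i, v i = R • EuclideanSpace.single i 1 + y i)
    (hy : ∀ i, ∑ j, |y i j| ≤ s) (hsR : s < R) : LinearIndependent ℝ v := by
  refine Fintype.linearIndependent_iff.mpr fun c hc i ↦ ?_
  have h := sub_mul_sum_abs_le hv hy c
  simp only [hc, PiLp.zero_apply, abs_zero, sum_const_zero] at h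
  have hsum : ∑ i, |c i| = 0 :=
    le_antisymm (nonpos_of_mul_nonpos_right h (sub_pos.mpr hsR)) (by positivity)
  exact abs_eq_zero.mp <|
    (sum_eq_zero_iff_of_nonneg fun i _ ↦ abs_nonneg _).mp hsum i (mem_univ i)

theorem closedBall_subset_convexHull [Nonempty ι]
    (hv : ∀ i, v i = R • EuclideanSpace.single i 1 + y i) (hy : ∀ i, ∑ j, |y i j| ≤ s)
    (hsR : s < R) :
    Metric.closedBall 0 ((R - s) / √(Fintype.card ι)) ⊆
      convexHull ℝ (Set.range v ∪ -Set.range v) := by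
  intro x hx
  have hspan := (linearIndependent hv hy hsR).span_eq_top_of_card_eq_finrank'
    finrank_euclideanSpace.symm
  obtain ⟨c, rfl⟩ :=
    (Submodule.mem_span_range_iff_exists_fun ℝ).mp (hspan ▸ Submodule.mem_top (x := x))
  have hcard : 0 < √(Fintype.card ι) := Real.sqrt_pos.mpr (by exact_mod_cast Fintype.card_pos)
  have hc : ∑ i, |c i| ≤ 1 := by
    have hx' : √(Fintype.card ι) * ‖∑ i, c i • v i‖ ≤ R - s := by
      rwa [mem_closedBall_zero_iff, le_div_iff₀ hcard, mul_comm] at hx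
    refine (mul_le_iff_le_one_right (sub_pos.mpr hsR)).mp ?_
    calc (R - s) * ∑ i, |c i| ≤ ∑ j, |(∑ i, c i • v i) j| := sub_mul_sum_abs_le hv hy c
      _ ≤ √(Fintype.card ι) * ‖∑ i, c i • v i‖ := EuclideanSpace.sum_abs_le_sqrt_card_mul_norm_s16 _
      _ ≤ R - s := hx'
  rw [convexHull_union_neg_eq_absConvexHull]
  exact absConvex_absConvexHull.sum_smul_mem
    (fun i ↦ subset_absConvexHull (Set.mem_range_self i)) hc

end PerturbedBasis

/-- If `vᵢ = R·fᵢ + yᵢ` with `‖yᵢ‖_∞ ≤ 1` and `R ≥ 2N`, then `√N·B₂ᴺ` is contained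
in the absolutely convex hull of `v₁,…,v_N`. -/
theorem stmt16 {N : ℕ} (hN : 0 < N) (R : ℝ) (hR : (2 : ℝ) * N ≤ R)
    (y : Fin N → EuclideanSpace ℝ (Fin N)) (hy : ∀ i j, |y i j| ≤ 1)
    (v : Fin N → EuclideanSpace ℝ (Fin N))
    (hv : ∀ i, v i = R • EuclideanSpace.single i 1 + y i) :
    Metric.closedBall (0 : EuclideanSpace ℝ (Fin N)) (Real.sqrt N) ⊆
      convexHull ℝ (Set.range v ∪ (-(Set.range v))) := by
  have : Nonempty (Fin N) := ⟨⟨0, hN⟩⟩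
  have hNpos : (0 : ℝ) < N := by exact_mod_cast hN
  have hcols : ∀ i, ∑ j, |y i j| ≤ N := fun i ↦
    (sum_le_card_nsmul _ _ 1 fun j _ ↦ hy i j).trans_eq (by simp)
  refine subset_trans (Metric.closedBall_subset_closedBall ?_)
    (PerturbedBasis.closedBall_subset_convexHull hv hcols (by linarith))
  rw [Fintype.card_fin, le_div_iff₀ (Real.sqrt_pos.mpr hNpos), Real.mul_self_sqrt hNpos.le]
  linarith
end
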